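/- Let d ≥ 1, σ > 0, μ ∈ ℝ^d with μ ≠ 0, and 0 ≤ ε < ‖μ‖. For class means m₋, m₊ ∈ ℝ^d subject to ‖m₋ − (−μ)‖ ≤ ε and ‖m₊ − μ‖ ≤ ε, and affine classifiers f_{α,β}(x) = sign(⟨α,x⟩ + β) with α ≠ 0, define Err(m₋, m₊; α, β) = ½·N(m₋, σ²I_d)({x : ⟨α,x⟩ + β ≥ 0}) + ½·N(m₊, σ²I_d)({x : ⟨α,x⟩ + β ≤ 0}). Then the maximin equals the minimax: sup over admissible (m₋, m₊) of inf over (α, β) of Err equals inf over (α, β) of sup over admissible (m₋, m₊) of Err, and the common value equals Φ(−(‖μ‖ − ε)/σ) = Err(−(1 − ε/‖μ‖)μ, (1 − ε/‖μ‖)μ; μ, 0), attained at the shifted means m_± = ±(1 − ε/‖μ‖)μ together with the classifier α = μ, β = 0. -/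

import Mathlib

/-!
For `α ≠ 0`, `⟪α, X⟫` is a real Gaussian when `X` is, so the error of the classifier
`sign (⟪α, x⟫ + β)` has the closed form `gaussianRisk`. The shifted means `±(1 - ε/‖μ‖) μ`
and the classifier `(μ, 0)` then form a saddle point of the error, which forces
maximin = minimax = `Φ(-(‖μ‖ - ε)/σ)`:
* against `(μ, 0)`, Cauchy–Schwarz bounds the error of any admissible means by that value;
* against the shifted means, any classifier has error `½ (Φ (s - t) + Φ (-s - t))` with
  `|t| ≤ (‖μ‖ - ε)/σ`, and this is at least `Φ (-|t|)` by the symmetry and unimodality of the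
  Gaussian density.
-/

open MeasureTheory ProbabilityTheory
open scoped RealInnerProductSpace NNReal

/-- The multivariate Gaussian measure `N(m, v·I_d)` on `ℝ^d = EuclideanSpace ℝ (Fin d)`. -/
noncomputable def gaussN (d : ℕ) (m : EuclideanSpace ℝ (Fin d)) (v : ℝ≥0) :
    Measure (EuclideanSpace ℝ (Fin d)) :=
  (Measure.pi fun i => gaussianReal (m i) v).map
    (MeasurableEquiv.toLp 2 (Fin d → ℝ))

/-- The standard Gaussian cumulative distribution function `Φ`. -/
noncomputable def Phi (z : ℝ) : ℝ := (gaussianReal 0 1 (Set.Iic z)).toReal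

open Set

theorem ciSup_ciInf_eq_and_ciInf_ciSup_eq_of_saddle {ι κ β : Type*}
    [ConditionallyCompleteLattice β] {F : ι → κ → β} {v : β} (p₀ : ι) (q₀ : κ)
    (hq₀ : ∀ p, F p q₀ ≤ v) (hp₀ : ∀ q, v ≤ F p₀ q)
    (hbddBelow : ∀ p, BddBelow (range (F p))) (hbddAbove : ∀ q, BddAbove (range (F · q))) :
    (⨆ p, ⨅ q, F p q) = v ∧ (⨅ q, ⨆ p, F p q) = v := by
  have : Nonempty ι := ⟨p₀⟩
  have : Nonempty κ := ⟨q₀⟩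
  have hinf_le : ∀ p, ⨅ q, F p q ≤ v := fun p => (ciInf_le (hbddBelow p) q₀).trans (hq₀ p)
  have le_hsup : ∀ q, v ≤ ⨆ p, F p q := fun q => (hp₀ q).trans (le_ciSup (hbddAbove q) p₀)
  exact ⟨le_antisymm (ciSup_le hinf_le)
      ((le_ciInf hp₀).trans (le_ciSup ⟨v, forall_mem_range.2 hinf_le⟩ p₀)),
    le_antisymm ((ciInf_le ⟨v, forall_mem_range.2 le_hsup⟩ q₀).trans (ciSup_le hq₀))
      (le_ciInf le_hsup)⟩

instance isProbabilityMeasure_gaussN (d : ℕ) (m : EuclideanSpace ℝ (Fin d)) (v : ℝ≥0) :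
    IsProbabilityMeasure (gaussN d m v) :=
  Measure.isProbabilityMeasure_map (MeasurableEquiv.toLp 2 (Fin d → ℝ)).measurable.aemeasurable

open Complex in
lemma charFun_gaussN (d : ℕ) (m : EuclideanSpace ℝ (Fin d)) (v : ℝ≥0)
    (t : EuclideanSpace ℝ (Fin d)) :
    charFun (gaussN d m v) t = cexp (⟪t, m⟫ * I - v * ‖t‖ ^ 2 / 2) := by
  rw [gaussN, MeasurableEquiv.coe_toLp, charFun_pi]
  simp_rw [charFun_gaussianReal, ← Complex.exp_sum]
  rw [← Complex.ofReal_pow, EuclideanSpace.real_norm_sq_eq, PiLp.inner_apply]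
  congr 1
  push_cast
  rw [Finset.sum_sub_distrib, Finset.sum_mul, Finset.mul_sum, Finset.sum_div]
  simp [mul_comm]

lemma gaussN_map_inner (d : ℕ) (m α : EuclideanSpace ℝ (Fin d)) (v : ℝ≥0) :
    (gaussN d m v).map (⟪α, ·⟫) = gaussianReal ⟪α, m⟫ (v * ‖α‖₊ ^ 2) := by
  refine Measure.ext_of_charFun (funext fun t => ?_)
  have hdual : t • innerSL ℝ α = InnerProductSpace.toDualMap ℝ _ (t • α) := by
    ext x; simp
  rw [show (⟪α, ·⟫) = ⇑(innerSL ℝ α) from rfl, charFun_map_eq_charFunDual_smul, hdual,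
    ← charFun_eq_charFunDual_toDualMap, charFun_gaussN, charFun_gaussianReal]
  congr 1
  rw [real_inner_smul_left, norm_smul, Real.norm_eq_abs, ← Complex.ofReal_pow, mul_pow, sq_abs]
  push_cast
  ring

lemma gaussianReal_eq_map_std (m : ℝ) (v : ℝ≥0) :
    gaussianReal m v = (gaussianReal 0 1).map (fun x => √v * x + m) := by
  rw [show (fun x => √v * x + m) = (· + m) ∘ (√v * ·) from rfl,
    ← Measure.map_map (by fun_prop) (by fun_prop), gaussianReal_map_const_mul,
    gaussianReal_map_add_const]
  congr
  · simp
  · ext; simp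

lemma gaussianReal_real_Iic {m : ℝ} {v : ℝ≥0} (hv : v ≠ 0) (c : ℝ) :
    (gaussianReal m v).real (Iic c) = Phi ((c - m) / √v) := by
  have hsqrt : 0 < √(v : ℝ) := Real.sqrt_pos.2 (NNReal.coe_pos.2 (pos_iff_ne_zero.2 hv))
  have hpre : (fun x => √v * x + m) ⁻¹' Iic c = Iic ((c - m) / √v) := by
    ext x
    simp only [mem_preimage, mem_Iic, le_div_iff₀ hsqrt]
    constructor <;> intro h <;> linarith
  rw [gaussianReal_eq_map_std, measureReal_def, Measure.map_apply (by fun_prop) measurableSet_Iic,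
    hpre, Phi]

lemma gaussN_real_inner_le {d : ℕ} (m : EuclideanSpace ℝ (Fin d)) {v : ℝ≥0} (hv : v ≠ 0)
    {α : EuclideanSpace ℝ (Fin d)} (hα : α ≠ 0) (c : ℝ) :
    (gaussN d m v).real {x | ⟪α, x⟫ ≤ c} = Phi ((c - ⟪α, m⟫) / (√v * ‖α‖)) := by
  have hmeas : Measurable (⟪α, ·⟫) := (innerSL ℝ α).continuous.measurable
  rw [show {x | ⟪α, x⟫ ≤ c} = (⟪α, ·⟫) ⁻¹' Iic c from rfl, ← map_measureReal_apply hmeas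
    measurableSet_Iic, gaussN_map_inner, gaussianReal_real_Iic (by simp [hv, hα])]
  simp [Real.sqrt_mul, Real.sqrt_sq]

lemma Phi_eq_cdf : Phi = cdf (gaussianReal 0 1) := funext fun z => (cdf_eq_real _ z).symm

lemma Phi_mono : Monotone Phi := Phi_eq_cdf ▸ (cdf _).mono

lemma Phi_nonneg (z : ℝ) : 0 ≤ Phi z := ENNReal.toReal_nonneg

lemma Phi_le_one (z : ℝ) : Phi z ≤ 1 := Phi_eq_cdf ▸ cdf_le_one _ z

lemma gaussianPDFReal_le_of_sq_le {μ : ℝ} {v : ℝ≥0} {x y : ℝ} (h : (x - μ) ^ 2 ≤ (y - μ) ^ 2) :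
    gaussianPDFReal μ v y ≤ gaussianPDFReal μ v x := by
  simp only [gaussianPDFReal_def]
  gcongr

lemma Phi_sub_Phi (a b : ℝ) : Phi b - Phi a = ∫ x in a..b, gaussianPDFReal 0 1 x := by
  have hPhi : ∀ z, Phi z = ∫ x in Iic z, gaussianPDFReal 0 1 x := fun z => by
    rw [Phi, gaussianReal_apply_eq_integral 0 one_ne_zero,
      ENNReal.toReal_ofReal (setIntegral_nonneg measurableSet_Iic
        fun x _ => gaussianPDFReal_nonneg _ _ _)]
  rw [hPhi, hPhi, intervalIntegral.integral_Iic_sub_Iic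
    (integrable_gaussianPDFReal 0 1).integrableOn (integrable_gaussianPDFReal 0 1).integrableOn]

lemma two_mul_Phi_neg_le_of_nonneg {s t : ℝ} (hs : 0 ≤ s) (ht : 0 ≤ t) :
    2 * Phi (-t) ≤ Phi (s - t) + Phi (-s - t) := by
  set f := gaussianPDFReal 0 1
  have hf : Continuous f := by simp only [f, gaussianPDFReal_def]; fun_prop
  -- `[t, s + t]` is both the mirror image of `[-s - t, -t]` and the translate by `2t` of
  -- `[-t, s - t]`, on which the density is larger
  have heven : ∀ x, f (-x) = f x := fun x => by simp [f, gaussianPDFReal_def]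
  have hmirror : ∫ x in (-t)..(s - t), f (x + 2 * t) = ∫ x in (-s - t)..(-t), f x := calc
    _ = ∫ x in t..(s + t), f x := by
      rw [intervalIntegral.integral_comp_add_right]; congr 1 <;> ring
    _ = ∫ x in t..(s + t), f (-x) := by simp_rw [heven]
    _ = _ := by rw [intervalIntegral.integral_comp_neg]; congr 1; ring
  have hshift : ∫ x in (-t)..(s - t), f (x + 2 * t) ≤ ∫ x in (-t)..(s - t), f x :=
    intervalIntegral.integral_mono_on (by linarith)
      ((hf.comp (continuous_add_const _)).intervalIntegrable _ _) (hf.intervalIntegrable _ _)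
      fun x hx => gaussianPDFReal_le_of_sq_le (by nlinarith [hx.1])
  have h₁ := Phi_sub_Phi (-t) (s - t)
  have h₂ := Phi_sub_Phi (-s - t) (-t)
  linarith

lemma two_mul_Phi_neg_abs_le (s t : ℝ) : 2 * Phi (-|t|) ≤ Phi (s - t) + Phi (-s - t) := by
  have hsym : Phi (s - |t|) + Phi (-s - |t|) ≤ Phi (s - t) + Phi (-s - t) :=
    add_le_add (Phi_mono (by linarith [le_abs_self t])) (Phi_mono (by linarith [le_abs_self t]))
  rcases le_total 0 s with hs | hs
  · linarith [two_mul_Phi_neg_le_of_nonneg hs (abs_nonneg t)]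
  · have := two_mul_Phi_neg_le_of_nonneg (neg_nonneg.2 hs) (abs_nonneg t)
    rw [neg_neg] at this
    linarith

section Risk

variable {E : Type*} [NormedAddCommGroup E] [InnerProductSpace ℝ E]

noncomputable def gaussianRisk (σ : ℝ) (mm mp α : E) (β : ℝ) : ℝ :=
  1 / 2 * Phi ((⟪α, mm⟫ + β) / (σ * ‖α‖)) + 1 / 2 * Phi (-(⟪α, mp⟫ + β) / (σ * ‖α‖))

lemma gaussianRisk_mem_Icc (σ : ℝ) (mm mp α : E) (β : ℝ) :
    gaussianRisk σ mm mp α β ∈ Icc 0 1 := by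
  unfold gaussianRisk
  constructor
  · linarith [Phi_nonneg ((⟪α, mm⟫ + β) / (σ * ‖α‖)), Phi_nonneg (-(⟪α, mp⟫ + β) / (σ * ‖α‖))]
  · linarith [Phi_le_one ((⟪α, mm⟫ + β) / (σ * ‖α‖)), Phi_le_one (-(⟪α, mp⟫ + β) / (σ * ‖α‖))]

lemma inner_div_le_of_norm_add_le {σ ε : ℝ} (hσ : 0 < σ) {μ m : E} (hμ : μ ≠ 0)
    (h : ‖m + μ‖ ≤ ε) : ⟪μ, m⟫ / (σ * ‖μ‖) ≤ -(‖μ‖ - ε) / σ := by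
  have hμn : 0 < ‖μ‖ := norm_pos_iff.2 hμ
  have hinner : ⟪μ, m⟫ ≤ ‖μ‖ * (ε - ‖μ‖) := calc
    ⟪μ, m⟫ = ⟪μ, m + μ⟫ - ‖μ‖ ^ 2 := by
      rw [inner_add_right, real_inner_self_eq_norm_sq]; ring
    _ ≤ ‖μ‖ * ‖m + μ‖ - ‖μ‖ ^ 2 := by gcongr; exact real_inner_le_norm _ _
    _ ≤ ‖μ‖ * ε - ‖μ‖ ^ 2 := by gcongr
    _ = _ := by ring
  rw [show -(‖μ‖ - ε) / σ = ‖μ‖ * (ε - ‖μ‖) / (σ * ‖μ‖) by field_simp; ring]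
  gcongr

lemma gaussianRisk_le_of_norm_sub_le {σ ε : ℝ} (hσ : 0 < σ) {μ mm mp : E} (hμ : μ ≠ 0)
    (hmm : ‖mm - -μ‖ ≤ ε) (hmp : ‖mp - μ‖ ≤ ε) :
    gaussianRisk σ mm mp μ 0 ≤ Phi (-(‖μ‖ - ε) / σ) := by
  have h₁ := Phi_mono (inner_div_le_of_norm_add_le (ε := ε) hσ hμ (m := mm)
    (by rwa [← sub_neg_eq_add]))
  have h₂ := Phi_mono (inner_div_le_of_norm_add_le (ε := ε) hσ hμ (m := -mp)
    (by rwa [neg_add_eq_sub, norm_sub_rev]))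
  rw [inner_neg_right] at h₂
  simp only [gaussianRisk, add_zero]
  linarith

lemma Phi_le_gaussianRisk_neg_smul_smul {σ : ℝ} (hσ : 0 < σ) {α : E} (hα : α ≠ 0) {c : ℝ}
    (hc : 0 ≤ c) (μ : E) (β : ℝ) :
    Phi (-(c * ‖μ‖) / σ) ≤ gaussianRisk σ (-(c • μ)) (c • μ) α β := by
  have hr : 0 < σ * ‖α‖ := mul_pos hσ (norm_pos_iff.2 hα)
  set t := c * ⟪α, μ⟫ / (σ * ‖α‖)
  set s := β / (σ * ‖α‖)
  have ht : |t| ≤ c * ‖μ‖ / σ := by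
    rw [abs_div, abs_mul, abs_of_nonneg hc, abs_of_pos hr, div_le_div_iff₀ hr hσ]
    calc c * |⟪α, μ⟫| * σ ≤ c * (‖α‖ * ‖μ‖) * σ := by gcongr; exact abs_real_inner_le_norm α μ
      _ = c * ‖μ‖ * (σ * ‖α‖) := by ring
  have hargs : (⟪α, -(c • μ)⟫ + β) / (σ * ‖α‖) = s - t ∧
      -(⟪α, c • μ⟫ + β) / (σ * ‖α‖) = -s - t := by
    simp only [inner_neg_right, real_inner_smul_right, s, t]; constructor <;> ring
  have hPhi_t : Phi (-(c * ‖μ‖) / σ) ≤ Phi (-|t|) := Phi_mono (by rw [neg_div]; linarith)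
  have hsaddle := two_mul_Phi_neg_abs_le s t
  rw [gaussianRisk, hargs.1, hargs.2]
  linarith

lemma norm_sub_one_sub_div_norm_smul_self {μ : E} (hμ : μ ≠ 0) {ε : ℝ} (hε : 0 ≤ ε) :
    ‖μ - (1 - ε / ‖μ‖) • μ‖ = ε := by
  rw [sub_smul, one_smul, sub_sub_cancel, norm_smul, norm_div, norm_norm, Real.norm_of_nonneg hε,
    div_mul_cancel₀ _ (norm_ne_zero_iff.2 hμ)]

end Risk

lemma gaussN_error_eq_gaussianRisk {d : ℕ} {σ : ℝ} (hσ : 0 < σ) {v : ℝ≥0}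
    (hv : (v : ℝ) = σ ^ 2) (mm mp : EuclideanSpace ℝ (Fin d)) {α : EuclideanSpace ℝ (Fin d)}
    (hα : α ≠ 0) (β : ℝ) :
    1 / 2 * (gaussN d mm v {x | 0 ≤ ⟪α, x⟫ + β}).toReal
      + 1 / 2 * (gaussN d mp v {x | ⟪α, x⟫ + β ≤ 0}).toReal = gaussianRisk σ mm mp α β := by
  have hsqrt : √(v : ℝ) = σ := by rw [hv, Real.sqrt_sq hσ.le]
  replace hv : v ≠ 0 := by rw [← NNReal.coe_ne_zero, hv]; positivity
  have hpos : {x : EuclideanSpace ℝ (Fin d) | 0 ≤ ⟪α, x⟫ + β} = {x | ⟪-α, x⟫ ≤ β} := by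
    ext x; simp only [mem_ofPred_eq, inner_neg_left]; constructor <;> intro h <;> linarith
  have hneg : {x : EuclideanSpace ℝ (Fin d) | ⟪α, x⟫ + β ≤ 0} = {x | ⟪α, x⟫ ≤ -β} := by
    ext x; simp only [mem_ofPred_eq]; constructor <;> intro h <;> linarith
  rw [hpos, hneg, ← measureReal_def, ← measureReal_def,
    gaussN_real_inner_le _ hv (neg_ne_zero.2 hα), gaussN_real_inner_le _ hv hα, hsqrt,
    inner_neg_left, norm_neg, gaussianRisk]
  congr 3 <;> ring

theorem stmt8_general (d : ℕ) (σ : ℝ) (hσ : 0 < σ)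
    (μ : EuclideanSpace ℝ (Fin d)) (ε : ℝ) (hε : 0 ≤ ε) (hε' : ε < ‖μ‖)
    (Err : EuclideanSpace ℝ (Fin d) → EuclideanSpace ℝ (Fin d) →
      EuclideanSpace ℝ (Fin d) → ℝ → ℝ)
    (hErr : ∀ mm mp α β, Err mm mp α β =
      1 / 2 * (gaussN d mm ⟨σ ^ 2, sq_nonneg σ⟩ {x | 0 ≤ ⟪α, x⟫ + β}).toReal
      + 1 / 2 * (gaussN d mp ⟨σ ^ 2, sq_nonneg σ⟩ {x | ⟪α, x⟫ + β ≤ 0}).toReal) :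
    (⨆ p : {p : EuclideanSpace ℝ (Fin d) × EuclideanSpace ℝ (Fin d) //
        ‖p.1 - (-μ)‖ ≤ ε ∧ ‖p.2 - μ‖ ≤ ε},
      ⨅ q : {q : EuclideanSpace ℝ (Fin d) × ℝ // q.1 ≠ 0},
        Err p.1.1 p.1.2 q.1.1 q.1.2)
      = (⨅ q : {q : EuclideanSpace ℝ (Fin d) × ℝ // q.1 ≠ 0},
          ⨆ p : {p : EuclideanSpace ℝ (Fin d) × EuclideanSpace ℝ (Fin d) //
            ‖p.1 - (-μ)‖ ≤ ε ∧ ‖p.2 - μ‖ ≤ ε},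
            Err p.1.1 p.1.2 q.1.1 q.1.2) ∧
    (⨆ p : {p : EuclideanSpace ℝ (Fin d) × EuclideanSpace ℝ (Fin d) //
        ‖p.1 - (-μ)‖ ≤ ε ∧ ‖p.2 - μ‖ ≤ ε},
      ⨅ q : {q : EuclideanSpace ℝ (Fin d) × ℝ // q.1 ≠ 0},
        Err p.1.1 p.1.2 q.1.1 q.1.2)
      = Phi (-(‖μ‖ - ε) / σ) ∧
    Phi (-(‖μ‖ - ε) / σ)
      = Err (-((1 - ε / ‖μ‖) • μ)) ((1 - ε / ‖μ‖) • μ) μ 0 ∧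
    (∀ mm mp : EuclideanSpace ℝ (Fin d), ‖mm - (-μ)‖ ≤ ε → ‖mp - μ‖ ≤ ε →
      Err mm mp μ 0 ≤ Phi (-(‖μ‖ - ε) / σ)) ∧
    (∀ α : EuclideanSpace ℝ (Fin d), α ≠ 0 → ∀ β : ℝ,
      Phi (-(‖μ‖ - ε) / σ) ≤ Err (-((1 - ε / ‖μ‖) • μ)) ((1 - ε / ‖μ‖) • μ) α β) := by
  have hμ : μ ≠ 0 := norm_pos_iff.1 (hε.trans_lt hε')
  set c := 1 - ε / ‖μ‖
  have hRisk : ∀ mm mp α β, α ≠ 0 → Err mm mp α β = gaussianRisk σ mm mp α β :=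
    fun mm mp α β hα => (hErr mm mp α β).trans (gaussN_error_eq_gaussianRisk hσ rfl mm mp hα β)
  have hmeans : ∀ mm mp, ‖mm - -μ‖ ≤ ε → ‖mp - μ‖ ≤ ε → Err mm mp μ 0 ≤ Phi (-(‖μ‖ - ε) / σ) :=
    fun mm mp hmm hmp => (hRisk _ _ _ _ hμ).trans_le (gaussianRisk_le_of_norm_sub_le hσ hμ hmm hmp)
  have hclass : ∀ α, α ≠ 0 → ∀ β, Phi (-(‖μ‖ - ε) / σ) ≤ Err (-(c • μ)) (c • μ) α β := by
    intro α hα β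
    rw [hRisk _ _ _ _ hα, show ‖μ‖ - ε = c * ‖μ‖ by simp only [c]; field_simp]
    exact Phi_le_gaussianRisk_neg_smul_smul hσ hα
      (sub_nonneg.2 ((div_le_one (norm_pos_iff.2 hμ)).2 hε'.le)) μ β
  have hadm : ‖-(c • μ) - -μ‖ ≤ ε ∧ ‖c • μ - μ‖ ≤ ε := by
    rw [norm_sub_rev, neg_sub_neg, norm_sub_rev, norm_sub_one_sub_div_norm_smul_self hμ hε]
    exact ⟨le_rfl, le_rfl⟩
  have hErr01 : ∀ mm mp α β, α ≠ 0 → Err mm mp α β ∈ Icc 0 1 :=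
    fun mm mp α β hα => hRisk mm mp α β hα ▸ gaussianRisk_mem_Icc σ mm mp α β
  obtain ⟨hmaximin, hminimax⟩ := ciSup_ciInf_eq_and_ciInf_ciSup_eq_of_saddle
    (F := fun (p : {p : EuclideanSpace ℝ (Fin d) × EuclideanSpace ℝ (Fin d) //
        ‖p.1 - (-μ)‖ ≤ ε ∧ ‖p.2 - μ‖ ≤ ε}) (q : {q : EuclideanSpace ℝ (Fin d) × ℝ // q.1 ≠ 0}) =>
      Err p.1.1 p.1.2 q.1.1 q.1.2)
    ⟨(-(c • μ), c • μ), hadm⟩ ⟨(μ, 0), hμ⟩ (fun p => hmeans _ _ p.2.1 p.2.2)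
    (fun q => hclass _ q.2 _) (fun p => ⟨0, forall_mem_range.2 fun q => (hErr01 _ _ _ _ q.2).1⟩)
    (fun q => ⟨1, forall_mem_range.2 fun p => (hErr01 _ _ _ _ q.2).2⟩)
  exact ⟨hmaximin.trans hminimax.symm, hmaximin,
    le_antisymm (hclass μ hμ 0) (hmeans _ _ hadm.1 hadm.2), hmeans, hclass⟩

/-- For class means within Wasserstein radius `ε` of `∓μ` (for Gaussians with
common covariance `σ²I_d`, that is `‖m₋ − (−μ)‖ ≤ ε`, `‖m₊ − μ‖ ≤ ε`), the maximin over means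
/ minimax over affine classifiers of the misclassification error coincide, equal
`Φ(−(‖μ‖−ε)/σ) = Err(−(1−ε/‖μ‖)μ, (1−ε/‖μ‖)μ; μ, 0)`, and are attained at the shifted means
`±(1−ε/‖μ‖)μ` with the classifier `(α,β) = (μ,0)` (saddle-point conditions). -/
theorem stmt8 (d : ℕ) (hd : 1 ≤ d) (σ : ℝ) (hσ : 0 < σ)
    (μ : EuclideanSpace ℝ (Fin d)) (hμ : μ ≠ 0) (ε : ℝ) (hε : 0 ≤ ε) (hε' : ε < ‖μ‖)
    (Err : EuclideanSpace ℝ (Fin d) → EuclideanSpace ℝ (Fin d) →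
      EuclideanSpace ℝ (Fin d) → ℝ → ℝ)
    (hErr : ∀ mm mp α β, Err mm mp α β =
      1 / 2 * (gaussN d mm ⟨σ ^ 2, sq_nonneg σ⟩ {x | 0 ≤ ⟪α, x⟫ + β}).toReal
      + 1 / 2 * (gaussN d mp ⟨σ ^ 2, sq_nonneg σ⟩ {x | ⟪α, x⟫ + β ≤ 0}).toReal) :
    (⨆ p : {p : EuclideanSpace ℝ (Fin d) × EuclideanSpace ℝ (Fin d) //
        ‖p.1 - (-μ)‖ ≤ ε ∧ ‖p.2 - μ‖ ≤ ε},
      ⨅ q : {q : EuclideanSpace ℝ (Fin d) × ℝ // q.1 ≠ 0},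
        Err p.1.1 p.1.2 q.1.1 q.1.2)
      = (⨅ q : {q : EuclideanSpace ℝ (Fin d) × ℝ // q.1 ≠ 0},
          ⨆ p : {p : EuclideanSpace ℝ (Fin d) × EuclideanSpace ℝ (Fin d) //
            ‖p.1 - (-μ)‖ ≤ ε ∧ ‖p.2 - μ‖ ≤ ε},
            Err p.1.1 p.1.2 q.1.1 q.1.2) ∧
    (⨆ p : {p : EuclideanSpace ℝ (Fin d) × EuclideanSpace ℝ (Fin d) //
        ‖p.1 - (-μ)‖ ≤ ε ∧ ‖p.2 - μ‖ ≤ ε},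
      ⨅ q : {q : EuclideanSpace ℝ (Fin d) × ℝ // q.1 ≠ 0},
        Err p.1.1 p.1.2 q.1.1 q.1.2)
      = Phi (-(‖μ‖ - ε) / σ) ∧
    Phi (-(‖μ‖ - ε) / σ)
      = Err (-((1 - ε / ‖μ‖) • μ)) ((1 - ε / ‖μ‖) • μ) μ 0 ∧
    (∀ mm mp : EuclideanSpace ℝ (Fin d), ‖mm - (-μ)‖ ≤ ε → ‖mp - μ‖ ≤ ε →
      Err mm mp μ 0 ≤ Phi (-(‖μ‖ - ε) / σ)) ∧
    (∀ α : EuclideanSpace ℝ (Fin d), α ≠ 0 → ∀ β : ℝ,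
      Phi (-(‖μ‖ - ε) / σ) ≤ Err (-((1 - ε / ‖μ‖) • μ)) ((1 - ε / ‖μ‖) • μ) α β) :=
  stmt8_general d σ hσ μ ε hε hε' Err hErr
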